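/- arXiv:1908.11109 — 2 statements merged into one kernel-verified Lean document; each statement's English description precedes it below -/
import Mathlib

section
/- Let V be a finite-dimensional ℚ-vector space and T a ℚ-linear endomorphism of V such that T(v) = v for some nonzero vector v ∈ V. Then there exists an integer n ≥ 1 such that tr(T^n) ≠ 0. -/
open LinearMap Module Set

/-- If all traces of positive powers vanish (over an alg. closed field of char zero),
the endomorphism is nilpotent. -/
lemma aux_isNilpotent_of_trace_pow {K W : Type*} [Field K] [IsAlgClosed K] [CharZero K]
    [AddCommGroup W] [Module K W] [FiniteDimensional K W] (φ : Module.End K W)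
    (h : ∀ n : ℕ, 1 ≤ n → LinearMap.trace K W (φ ^ n) = 0) : IsNilpotent φ := by
  classical
  have hT : ⨆ μ, φ.maxGenEigenspace μ = ⊤ := Module.End.iSup_maxGenEigenspace_eq_top φ
  have hind := φ.independent_maxGenEigenspace
  have hfin : {μ | φ.maxGenEigenspace μ ≠ ⊥}.Finite :=
    WellFoundedGT.finite_ne_bot_of_iSupIndep hind
  have hds := DirectSum.isInternal_submodule_of_iSupIndep_of_iSup_eq_top hind hT
  have hm : ∀ μ, MapsTo φ (φ.maxGenEigenspace μ) (φ.maxGenEigenspace μ) :=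
    fun μ => φ.mapsTo_maxGenEigenspace_of_comm rfl μ
  have hmap : ∀ (n : ℕ) μ, MapsTo (φ ^ n) (φ.maxGenEigenspace μ) (φ.maxGenEigenspace μ) :=
    fun n μ => φ.mapsTo_maxGenEigenspace_of_comm ((Commute.refl φ).pow_right n) μ
  -- trace of restricted powers
  have key : ∀ (μ : K) (n : ℕ), LinearMap.trace K _ ((φ ^ n).restrict (hmap n μ)) =
      μ ^ n * (finrank K (φ.maxGenEigenspace μ) : K) := by
    intro μ n
    have hres : ∀ n : ℕ, (φ ^ n).restrict (hmap n μ) = (φ.restrict (hm μ)) ^ n := by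
      intro n; rw [Module.End.pow_restrict n (hm μ)]
    rw [hres]
    induction n with
    | zero => simp [LinearMap.trace_id]
    | succ n ih =>
      have hnil := φ.isNilpotent_restrict_maxGenEigenspace_sub_algebraMap μ
      have := LinearMap.trace_comp_eq_mul_of_commute_of_isNilpotent (f := (φ.restrict (hm μ)) ^ n)
        (g := φ.restrict (hm μ)) μ ((Commute.refl _).pow_left n) hnil
      rw [pow_succ, Module.End.mul_eq_comp, this, ih]; ring
  -- power sums vanish
  have hsum : ∀ n : ℕ, 1 ≤ n →
      ∑ μ ∈ hfin.toFinset, μ ^ n * (finrank K (φ.maxGenEigenspace μ) : K) = 0 := by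
    intro n hn
    calc ∑ μ ∈ hfin.toFinset, μ ^ n * (finrank K (φ.maxGenEigenspace μ) : K)
        = ∑ μ ∈ hfin.toFinset, LinearMap.trace K _ ((φ ^ n).restrict (hmap n μ)) :=
          Finset.sum_congr rfl fun μ _ => (key μ n).symm
      _ = LinearMap.trace K W (φ ^ n) :=
          (LinearMap.trace_eq_sum_trace_restrict' hds hfin (hmap n)).symm
      _ = 0 := h n hn
  -- nonzero eigenvalues don't occur
  have hzero : ∀ μ ∈ hfin.toFinset, μ = 0 := by
    by_contra hc
    push_neg at hc
    obtain ⟨μ₀, hμ₀s, hμ₀⟩ := hc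
    classical
    set t : Finset K := hfin.toFinset.filter (· ≠ 0) with ht
    have htne : μ₀ ∈ t := Finset.mem_filter.mpr ⟨hμ₀s, hμ₀⟩
    set e := t.equivFin
    set G : K → ℕ := fun μ => finrank K (φ.maxGenEigenspace μ) with hG
    have hvan : ∀ i : Fin t.card,
        (∑ j : Fin t.card, ((G (e.symm j : K) : K) * (e.symm j : K))
          * (e.symm j : K) ^ (i : ℕ)) = 0 := by
      intro i
      have hts : ∑ μ ∈ t, μ ^ ((i : ℕ) + 1) * (G μ : K) = 0 := by
        refine (Finset.sum_filter_of_ne (p := (· ≠ 0)) (s := hfin.toFinset)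
          (f := fun μ => μ ^ ((i : ℕ) + 1) * (G μ : K)) ?_).trans (hsum ((i : ℕ) + 1) (by omega))
        rintro μ - hfμ rfl
        simp at hfμ
      calc (∑ j : Fin t.card, ((G (e.symm j : K) : K) * (e.symm j : K)) * (e.symm j : K) ^ (i : ℕ))
          = ∑ μ : t, ((G (μ : K) : K) * (μ : K)) * (μ : K) ^ (i : ℕ) :=
            Equiv.sum_comp e.symm (fun μ : t => ((G (μ : K) : K) * (μ : K)) * (μ : K) ^ (i : ℕ))
        _ = ∑ μ ∈ t, ((G μ : K) * μ) * μ ^ (i : ℕ) :=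
            Finset.sum_coe_sort t (fun μ => ((G μ : K) * μ) * μ ^ (i : ℕ))
        _ = ∑ μ ∈ t, μ ^ ((i : ℕ) + 1) * (G μ : K) :=
            Finset.sum_congr rfl fun μ _ => by ring
        _ = 0 := hts
    have hinj : Function.Injective (fun j : Fin t.card => (e.symm j : K)) :=
      fun a b hab => e.symm.injective (Subtype.ext hab)
    have := Matrix.eq_zero_of_forall_pow_sum_mul_pow_eq_zero (R := K) hinj hvan
    have h0 : ((G (e.symm (e ⟨μ₀, htne⟩) : K) : K)
        * (e.symm (e ⟨μ₀, htne⟩) : K)) = 0 := congrFun this (e ⟨μ₀, htne⟩)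
    rw [Equiv.symm_apply_apply] at h0
    simp only at h0
    rcases mul_eq_zero.mp h0 with h1 | h1
    · have : finrank K (φ.maxGenEigenspace μ₀) = 0 := by
        rw [hG] at h1; exact_mod_cast h1
      have hb : φ.maxGenEigenspace μ₀ = ⊥ := Submodule.finrank_eq_zero.mp this
      exact (hfin.mem_toFinset.mp hμ₀s) hb
    · exact hμ₀ h1
  -- everything is in the generalized 0-eigenspace
  have htop : φ.maxGenEigenspace 0 = ⊤ := by
    rw [← top_le_iff, ← hT]
    refine iSup_le fun μ => ?_
    by_cases hμ : φ.maxGenEigenspace μ = ⊥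
    · simp [hμ]
    · have := hzero μ (hfin.mem_toFinset.mpr hμ)
      rw [this]
  rw [Module.End.maxGenEigenspace] at htop
  refine ((LinearMap.charpoly_nilpotent_tfae φ).out 0 2).mpr fun m => ?_
  have hmmem : m ∈ (φ.genEigenspace 0) ⊤ := htop ▸ Submodule.mem_top
  rw [Module.End.mem_genEigenspace] at hmmem
  obtain ⟨k, -, hk⟩ := hmmem
  exact ⟨k, by simpa using hk⟩

/-- If a linear endomorphism `T` of a finite-dimensional ℚ-vector space
fixes some nonzero vector `v`, then `tr(T^n) ≠ 0` for some `n ≥ 1`. -/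
theorem exists_trace_pow_ne_zero_of_fixed_vector
    {V : Type*} [AddCommGroup V] [Module ℚ V] [FiniteDimensional ℚ V]
    (T : V →ₗ[ℚ] V) (v : V) (hv : v ≠ 0) (hTv : T v = v) :
    ∃ n : ℕ, 1 ≤ n ∧ LinearMap.trace ℚ V (T ^ n) ≠ 0 := by
  by_contra hc
  push_neg at hc
  -- move to matrices over the algebraic closure
  classical
  set K := AlgebraicClosure ℚ
  let b := Module.finBasis ℚ V
  set M := LinearMap.toMatrix b b T with hM
  set A := M.map (algebraMap ℚ K) with hA
  set φ := Matrix.toLinAlgEquiv' A with hφ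
  have hfix : ∀ k : ℕ, (T ^ k) v = v := by
    intro k
    rw [Module.End.pow_apply]
    exact Function.iterate_fixed hTv k
  have htr : ∀ n : ℕ, 1 ≤ n → LinearMap.trace K _ (φ ^ n) = 0 := by
    intro n hn
    have h1 : φ ^ n = Matrix.toLinAlgEquiv' (A ^ n) := (map_pow (Matrix.toLinAlgEquiv') A n).symm
    have h2 : A ^ n = (M ^ n).map (algebraMap ℚ K) := by
      rw [hA, ← RingHom.mapMatrix_apply, ← map_pow, RingHom.mapMatrix_apply]
    have h3 : M ^ n = LinearMap.toMatrix b b (T ^ n) := LinearMap.toMatrix_pow (v₁ := b) T n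
    have h4 : LinearMap.trace K _ (φ ^ n) = Matrix.trace (A ^ n) := by
      rw [h1, LinearMap.trace_eq_matrix_trace K (Pi.basisFun K _),
        LinearMap.toMatrix_eq_toMatrix']
      congr 1
      exact LinearMap.toMatrix'_toLin' (A ^ n)
    have h5 : Matrix.trace (A ^ n) = algebraMap ℚ K (Matrix.trace (M ^ n)) := by
      rw [h2]
      have := AddMonoidHom.map_trace ((algebraMap ℚ K) : ℚ →+* K) (M ^ n)
      rw [this]
    have h6 : Matrix.trace (M ^ n) = LinearMap.trace ℚ V (T ^ n) := by
      rw [h3, ← LinearMap.trace_eq_matrix_trace ℚ b]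
    rw [h4, h5, h6, hc n hn, map_zero]
  have hnil : IsNilpotent φ := aux_isNilpotent_of_trace_pow φ htr
  obtain ⟨k, hk⟩ := hnil
  have hAk : A ^ k = 0 := by
    have h0 : Matrix.toLinAlgEquiv' (A ^ k) = Matrix.toLinAlgEquiv' 0 := by
      rw [map_pow, map_zero]; exact hk
    exact Matrix.toLinAlgEquiv'.injective h0
  have hMk : M ^ k = 0 := by
    ext i j
    have h2 : A ^ k = (M ^ k).map (algebraMap ℚ K) := by
      rw [hA, ← RingHom.mapMatrix_apply, ← map_pow, RingHom.mapMatrix_apply]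
    have h7 : algebraMap ℚ K ((M ^ k) i j) = algebraMap ℚ K 0 := by
      have : (M ^ k).map (algebraMap ℚ K) i j = 0 := by rw [← h2, hAk]; rfl
      rw [map_zero]
      exact this
    simpa using (algebraMap ℚ K).injective h7
  have hTk : T ^ k = 0 := by
    have h3 : M ^ k = LinearMap.toMatrix b b (T ^ k) := LinearMap.toMatrix_pow (v₁ := b) T k
    apply (LinearMap.toMatrix b b).injective
    rw [← h3, hMk, map_zero]
  have := hfix k
  rw [hTk] at this
  exact hv (by simpa using this.symm)
end

section
/- Let A = Λ_ℚ(x_1,…,x_n) be a rational exterior algebra on generators of odd degrees and let B = ⊕_{m≥0} B^m be a finite-dimensional nonnegatively graded ℚ-algebra with B^0 = ℚ·1 and B^m = 0 for all odd m. Give A ⊗_ℚ B the tensor-product grading, and let F be a graded ring endomorphism of A ⊗ B. Let ι_A : A → A⊗B be a ↦ a⊗1 and π_A : A⊗B → A the ℚ-linear map determined by a⊗b ↦ ε_B(b)·a, where ε_B : B → ℚ is the projection onto the degree-0 component; define ι_B : B → A⊗B, b ↦ 1⊗b, and π_B : A⊗B → B via the projection ε_A : A → ℚ analogously. Then tr(F)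 = tr(π_A ∘ F ∘ ι_A) · tr(π_B ∘ F ∘ ι_B). -/
/-!
Let `x_S` be the monomial basis of `A` and expand `z ∈ A ⊗ B` as `∑_S x_S ⊗ z_S`. Since `B` has
no odd part, `F (x_i ⊗ 1)` has no component along `x_∅ = 1`, so `F (x_S ⊗ 1)` is a sum of terms
`a ⊗ b` with `a` of exterior length at least `|S|`. Hence the `x_S`-coefficient of
`F (x_S ⊗ b) = F (x_S ⊗ 1) * F (1 ⊗ b)` is the `x_S`-coefficient of `F (x_S ⊗ 1)` times the
`x_∅`-coefficient of `F (1 ⊗ b)`. The first lies in `B^0 = ℚ·1` for degree reasons, so it is the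
scalar `ε_B` reads off; the second is `π_B (F (1 ⊗ b))`, because `ε_A` is the `x_∅`-coordinate.
So `F` and `(π_A ∘ F ∘ ι_A) ⊗ (π_B ∘ F ∘ ι_B)` have the same diagonal in the basis `x_S ⊗ b_k`,
hence the same trace.
-/

noncomputable section

namespace Paper

open scoped TensorProduct

variable {A B : Type*} [Ring A] [Algebra ℚ A] [Ring B] [Algebra ℚ B]

/-- The tensor-product grading on `A ⊗[ℚ] B`: `(A ⊗ B)^m = ⊕_{p+q=m} A^p ⊗ B^q`. -/
def tensorGrading (𝒜 : ℕ → Submodule ℚ A) (ℬ : ℕ → Submodule ℚ B) (m : ℕ) :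
    Submodule ℚ (A ⊗[ℚ] B) :=
  ⨆ p : Fin (m + 1), LinearMap.range (TensorProduct.mapIncl (𝒜 p) (ℬ (m - p)))

/-- `ι_A : A → A ⊗ B`, `a ↦ a ⊗ 1`. -/
def inclLeft : A →ₗ[ℚ] A ⊗[ℚ] B := (Algebra.TensorProduct.includeLeft : A →ₐ[ℚ] A ⊗[ℚ] B).toLinearMap

/-- `ι_B : B → A ⊗ B`, `b ↦ 1 ⊗ b`. -/
def inclRight : B →ₗ[ℚ] A ⊗[ℚ] B := (Algebra.TensorProduct.includeRight : B →ₐ[ℚ] A ⊗[ℚ] B).toLinearMap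

/-- `π_A : A ⊗ B → A`, `a ⊗ b ↦ ε_B(b) · a`, where `ε_B : B → ℚ` is the augmentation. -/
def projLeft (εB : B →ₗ[ℚ] ℚ) : A ⊗[ℚ] B →ₗ[ℚ] A :=
  (TensorProduct.rid ℚ A).toLinearMap ∘ₗ TensorProduct.map LinearMap.id εB

/-- `π_B : A ⊗ B → B`, `a ⊗ b ↦ ε_A(a) · b`, where `ε_A : A → ℚ` is the augmentation. -/
def projRight (εA : A →ₗ[ℚ] ℚ) : A ⊗[ℚ] B →ₗ[ℚ] B :=
  (TensorProduct.lid ℚ B).toLinearMap ∘ₗ TensorProduct.map εA LinearMap.id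

end Paper

namespace Paper

open Module TensorProduct

section HomogeneousBasis

variable {R M γ ι : Type*} [Semiring R] [AddCommMonoid M] [Module R M] [DecidableEq γ]
  (𝒢 : γ → Submodule R M) [DirectSum.Decomposition 𝒢] (b : Basis ι R M) {deg : ι → γ}

theorem repr_eq_zero_of_mem_of_ne (hb : ∀ i, b i ∈ 𝒢 (deg i)) {p : γ} {x : M} (hx : x ∈ 𝒢 p)
    {i : ι} (hi : deg i ≠ p) : b.repr x i = 0 := by
  let π : M →ₗ[R] M := (𝒢 (deg i)).subtype ∘ₗ DirectSum.component R γ (fun q => 𝒢 q) (deg i) ∘ₗ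
    (DirectSum.decomposeLinearEquiv 𝒢).toLinearMap
  have hπ : ∀ y, π y = DirectSum.decompose 𝒢 y (deg i) := fun y => rfl
  have hcoord : b.coord i ∘ₗ π = b.coord i := by
    refine b.ext fun j => ?_
    rw [LinearMap.comp_apply, hπ]
    by_cases hj : deg j = deg i
    · rw [DirectSum.decompose_of_mem_same 𝒢 (hj ▸ hb j)]
    · rw [DirectSum.decompose_of_mem_ne 𝒢 (hb j) hj, map_zero, Basis.coord_apply, b.repr_self,
        Finsupp.single_eq_of_ne (by rintro rfl; exact hj rfl)]
  have h := LinearMap.congr_fun hcoord x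
  rw [LinearMap.comp_apply, hπ, DirectSum.decompose_of_mem_ne 𝒢 hx hi.symm, map_zero] at h
  simpa using h.symm

end HomogeneousBasis

theorem augmentation_eq_coord {R A ι : Type*} [Semiring R] [Semiring A] [Module R A]
    (𝒜 : ℕ → Submodule R A) (b : Basis ι R A) {deg : ι → ℕ} (hb : ∀ i, b i ∈ 𝒜 (deg i))
    {i₀ : ι} (hb₀ : b i₀ = 1)
    (hdeg : ∀ i, i ≠ i₀ → deg i ≠ 0) {ε : A →ₗ[R] R} (hε1 : ε 1 = 1)
    (hε0 : ∀ m, m ≠ 0 → ∀ a ∈ 𝒜 m, ε a = 0) : ε = b.coord i₀ := by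
  refine b.ext fun i => ?_
  rcases eq_or_ne i i₀ with rfl | hi
  · rw [Basis.coord_apply, b.repr_self, Finsupp.single_eq_same, hb₀, hε1]
  · rw [hε0 _ (hdeg i hi) _ (hb i), Basis.coord_apply, b.repr_self,
      Finsupp.single_eq_of_ne hi.symm]

theorem eq_smul_one_of_mem_one {R B : Type*} [CommSemiring R] [Semiring B] [Algebra R B]
    {ε : B →ₗ[R] R} (hε : ε 1 = 1) {y : B} (hy : y ∈ (1 : Submodule R B)) : y = ε y • 1 := by
  obtain ⟨r, rfl⟩ := Submodule.mem_one.mp hy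
  simp [Algebra.algebraMap_eq_smul_one, hε]

section TensorBasis

variable {R M N ι κ : Type*} [CommRing R] [AddCommGroup M] [Module R M] [AddCommGroup N]
  [Module R N] [DecidableEq ι]

theorem tensorProduct_repr_apply (b : Basis ι R M) (c : Basis κ R N) (z : M ⊗[R] N) (i : ι)
    (k : κ) : (b.tensorProduct c).repr z (i, k) = c.repr (equivFinsuppOfBasisLeft b z i) k := by
  induction z using TensorProduct.induction_on with
  | zero => simp
  | tmul x y =>
    simp [Basis.tensorProduct_repr_tmul_apply, mul_comm]
  | add z z' hz hz' => simp only [map_add, Finsupp.add_apply, hz, hz']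

theorem trace_eq_of_repr_apply_self_eq [Fintype ι] (b : Basis ι R M)
    {f g : M →ₗ[R] M} (h : ∀ i, b.repr (f (b i)) i = b.repr (g (b i)) i) :
    LinearMap.trace R M f = LinearMap.trace R M g := by
  rw [LinearMap.trace_eq_matrix_trace R b, LinearMap.trace_eq_matrix_trace R b]
  exact Finset.sum_congr rfl fun i _ => by simp only [Matrix.diag, LinearMap.toMatrix_apply, h]

end TensorBasis

section ExteriorBasis

variable {R M I : Type*} [CommRing R] [AddCommGroup M] [Module R M] [LinearOrder I]
  (b : Basis I R M)

theorem basis_exteriorAlgebra_eq_prod (S : Finset I) :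
    b.ExteriorAlgebra S =
      (List.ofFn fun j => ExteriorAlgebra.ι R (b (S.orderEmbOfFin rfl j))).prod := by
  rw [ExteriorAlgebra.basis_apply_ofCard b rfl, ExteriorAlgebra.ιMulti_family,
    ExteriorAlgebra.ιMulti_apply]
  rfl

theorem basis_exteriorAlgebra_mem (S : Finset I) : b.ExteriorAlgebra S ∈ ⋀[R]^S.card M := by
  rw [ExteriorAlgebra.basis_apply]
  exact ExteriorAlgebra.ιMulti_range R _ ⟨_, rfl⟩

theorem basis_exteriorAlgebra_empty : b.ExteriorAlgebra ∅ = 1 := by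
  simp [basis_exteriorAlgebra_eq_prod]

theorem basis_exteriorAlgebra_mem_graded (𝒜 : ℕ → Submodule R (ExteriorAlgebra R M))
    [SetLike.GradedMonoid 𝒜] {d : I → ℕ} (hd : ∀ i, ExteriorAlgebra.ι R (b i) ∈ 𝒜 (d i))
    (S : Finset I) : b.ExteriorAlgebra S ∈ 𝒜 (∑ i ∈ S, d i) := by
  have h := SetLike.list_prod_ofFn_mem_graded (A := 𝒜) _ _ fun j => hd (S.orderEmbOfFin rfl j)
  rw [List.sum_ofFn] at h
  rw [basis_exteriorAlgebra_eq_prod]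
  convert h using 2
  rw [← Finset.sum_coe_sort S]
  exact (Equiv.sum_comp (S.orderIsoOfFin rfl).toEquiv (fun i => d i)).symm

-- `x * x'` lies in `⋀^(p + |U|)` for each monomial `x_U` of `x'`, so only `U = ∅` reaches `x_S`.
theorem basis_exteriorAlgebra_repr_mul_of_mem {p : ℕ} {x : ExteriorAlgebra R M} (hx : x ∈ ⋀[R]^p M)
    {S : Finset I} (hp : S.card ≤ p) (x' : ExteriorAlgebra R M) :
    b.ExteriorAlgebra.repr (x * x') S =
      b.ExteriorAlgebra.repr x S * b.ExteriorAlgebra.repr x' ∅ := by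
  have h : b.ExteriorAlgebra.coord S ∘ₗ LinearMap.mulLeft R x =
      b.ExteriorAlgebra.repr x S • b.ExteriorAlgebra.coord ∅ := by
    refine b.ExteriorAlgebra.ext fun U => ?_
    rcases U.eq_empty_or_nonempty with rfl | hU
    · rw [LinearMap.comp_apply, LinearMap.mulLeft_apply, LinearMap.smul_apply, Basis.coord_apply,
        Basis.coord_apply, Basis.repr_self, Finsupp.single_eq_same, smul_eq_mul, mul_one,
        basis_exteriorAlgebra_empty, mul_one]
    · have hxU := SetLike.mul_mem_graded hx (basis_exteriorAlgebra_mem b U)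
      rw [LinearMap.comp_apply, LinearMap.mulLeft_apply, Basis.coord_apply,
        repr_eq_zero_of_mem_of_ne (fun n => ⋀[R]^n M) _ (basis_exteriorAlgebra_mem b) hxU
          (by have := hU.card_pos; omega),
        LinearMap.smul_apply, Basis.coord_apply, Basis.repr_self, Finsupp.single_apply,
        if_neg hU.ne_empty, smul_zero]
  simpa using LinearMap.congr_fun h x'

end ExteriorBasis

section LengthFiltration

variable (R M N : Type*) [CommRing R] [AddCommGroup M] [Module R M] [Ring N] [Algebra R N]

def lengthFiltration (ℓ : ℕ) : Submodule R (ExteriorAlgebra R M ⊗[R] N) :=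
  Submodule.span R {z | ∃ p, ℓ ≤ p ∧ ∃ x ∈ ⋀[R]^p M, ∃ y : N, x ⊗ₜ y = z}

instance : SetLike.GradedMonoid (lengthFiltration R M N) where
  one_mem := Submodule.subset_span ⟨0, le_rfl, 1, SetLike.one_mem_graded _, 1, rfl⟩
  mul_mem {i j} z w hz hw := by
    refine (?_ : lengthFiltration R M N i * lengthFiltration R M N j ≤ _)
      (Submodule.mul_mem_mul hz hw)
    rw [lengthFiltration, lengthFiltration, Submodule.span_mul_span, Submodule.span_le]
    rintro _ ⟨_, ⟨p, hp, x, hx, y, rfl⟩, _, ⟨q, hq, x', hx', y', rfl⟩, rfl⟩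
    exact Submodule.subset_span ⟨p + q, by omega, x * x', SetLike.mul_mem_graded hx hx', y * y',
      (Algebra.TensorProduct.tmul_mul_tmul _ _ _ _).symm⟩

variable {R M N} {I : Type*} [LinearOrder I] (b : Basis I R M)

theorem mem_lengthFiltration_one_of_coeff_empty_eq_zero {z : ExteriorAlgebra R M ⊗[R] N}
    (hz : equivFinsuppOfBasisLeft b.ExteriorAlgebra z ∅ = 0) : z ∈ lengthFiltration R M N 1 := by
  rw [← (equivFinsuppOfBasisLeft b.ExteriorAlgebra).symm_apply_apply z,
    equivFinsuppOfBasisLeft_symm_apply]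
  refine Submodule.finsuppSum_mem _ _ _ _ fun S hS => Submodule.subset_span
    ⟨S.card, ?_, _, basis_exteriorAlgebra_mem b S, _, rfl⟩
  rw [Nat.one_le_iff_ne_zero, Ne, Finset.card_eq_zero]
  rintro rfl
  exact hS hz

theorem map_basis_tmul_one_mem_lengthFiltration
    {F : ExteriorAlgebra R M ⊗[R] N →ₐ[R] ExteriorAlgebra R M ⊗[R] N}
    (hF : ∀ i, F (ExteriorAlgebra.ι R (b i) ⊗ₜ 1) ∈ lengthFiltration R M N 1) (S : Finset I) :
    F (b.ExteriorAlgebra S ⊗ₜ 1) ∈ lengthFiltration R M N S.card := by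
  have h := SetLike.list_prod_ofFn_mem_graded (A := lengthFiltration R M N) (fun _ => 1) _
    fun j => hF (S.orderEmbOfFin rfl j)
  rw [List.sum_ofFn, Finset.sum_const, Finset.card_univ, Fintype.card_fin, smul_eq_mul,
    mul_one] at h
  have hincl : ∀ x : ExteriorAlgebra R M, x ⊗ₜ (1 : N) =
      (Algebra.TensorProduct.includeLeft : ExteriorAlgebra R M →ₐ[R] _ ⊗[R] N) x := fun _ => rfl
  rwa [basis_exteriorAlgebra_eq_prod, hincl, map_list_prod, map_list_prod, List.map_ofFn,
    List.map_ofFn]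

theorem equivFinsuppOfBasisLeft_mul_of_mem_lengthFiltration {S : Finset I}
    {z : ExteriorAlgebra R M ⊗[R] N}
    (hz : z ∈ lengthFiltration R M N S.card) (w : ExteriorAlgebra R M ⊗[R] N) :
    equivFinsuppOfBasisLeft b.ExteriorAlgebra (z * w) S =
      equivFinsuppOfBasisLeft b.ExteriorAlgebra z S *
        equivFinsuppOfBasisLeft b.ExteriorAlgebra w ∅ := by
  induction hz using Submodule.span_induction with
  | mem _ h =>
    obtain ⟨p, hp, x, hx, y, rfl⟩ := h
    induction w using TensorProduct.induction_on with
    | zero => simp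
    | tmul x' y' =>
      simp only [Algebra.TensorProduct.tmul_mul_tmul, equivFinsuppOfBasisLeft_apply_tmul_apply,
        basis_exteriorAlgebra_repr_mul_of_mem b hx hp, smul_mul_smul_comm, mul_smul]
    | add w w' hw hw' => simp only [mul_add, map_add, Finsupp.add_apply, hw, hw']
  | zero => simp
  | add z z' _ _ hz hz' => simp only [add_mul, map_add, Finsupp.add_apply, hz, hz']
  | smul c z _ hz => simp only [smul_mul_assoc, map_smul, Finsupp.smul_apply, hz]

end LengthFiltration

section TensorGrading

variable {A B ι : Type*} [Ring A] [Algebra ℚ A] [Ring B] [Algebra ℚ B] [DecidableEq ι]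
  {𝒜 : ℕ → Submodule ℚ A} {ℬ : ℕ → Submodule ℚ B}

theorem tmul_mem_tensorGrading {p q : ℕ} {a : A} {b : B} (ha : a ∈ 𝒜 p) (hb : b ∈ ℬ q) :
    a ⊗ₜ[ℚ] b ∈ tensorGrading 𝒜 ℬ (p + q) := by
  refine Submodule.mem_iSup_of_mem (⟨p, by omega⟩ : Fin (p + q + 1)) ⟨⟨a, ha⟩ ⊗ₜ ⟨b, ?_⟩, rfl⟩
  rwa [Nat.add_sub_cancel_left]

theorem equivFinsuppOfBasisLeft_mem_of_mem_tensorGrading [DirectSum.Decomposition 𝒜]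
    (bA : Basis ι ℚ A) {deg : ι → ℕ} (hb : ∀ i, bA i ∈ 𝒜 (deg i)) {i : ι} {q : ℕ}
    {z : A ⊗[ℚ] B} (hz : z ∈ tensorGrading 𝒜 ℬ (deg i + q)) :
    equivFinsuppOfBasisLeft bA z i ∈ ℬ q := by
  induction hz using Submodule.iSup_induction' with
  | mem p w hw =>
    obtain ⟨y, rfl⟩ := hw
    induction y using TensorProduct.induction_on with
    | zero => simp
    | tmul x y =>
      simp only [mapIncl, map_tmul, Submodule.subtype_apply,
        equivFinsuppOfBasisLeft_apply_tmul_apply]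
      by_cases hp : deg i = p
      · refine Submodule.smul_mem _ _ ?_
        simpa [← hp] using y.2
      · rw [repr_eq_zero_of_mem_of_ne 𝒜 bA hb x.2 hp, zero_smul]
        exact zero_mem _
    | add y y' hy hy' => rw [map_add, map_add, Finsupp.add_apply]; exact add_mem hy hy'
  | zero => simp
  | add z z' _ _ hz hz' => rw [map_add, Finsupp.add_apply]; exact add_mem hz hz'

theorem repr_projLeft (bA : Basis ι ℚ A) (εB : B →ₗ[ℚ] ℚ) (z : A ⊗[ℚ] B) (i : ι) :
    bA.repr (projLeft εB z) i = εB (equivFinsuppOfBasisLeft bA z i) := by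
  induction z using TensorProduct.induction_on with
  | zero => simp
  | tmul x y =>
    simp [projLeft, mul_comm]
  | add z z' hz hz' => simp only [map_add, Finsupp.add_apply, hz, hz']

theorem projRight_coord (bA : Basis ι ℚ A) (i : ι) (z : A ⊗[ℚ] B) :
    projRight (bA.coord i) z = equivFinsuppOfBasisLeft bA z i := by
  induction z using TensorProduct.induction_on with
  | zero => simp
  | tmul x y => simp [projRight]
  | add z z' hz hz' => simp only [map_add, Finsupp.add_apply, hz, hz']

end TensorGrading

section GradedEndomorphism

variable {M B I : Type*} [AddCommGroup M] [Module ℚ M] [Ring B] [Algebra ℚ B] [LinearOrder I]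
  (b : Basis I ℚ M) {𝒜 : ℕ → Submodule ℚ (ExteriorAlgebra ℚ M)} [GradedAlgebra 𝒜] {d : I → ℕ}
  {ℬ : ℕ → Submodule ℚ B} {F : ExteriorAlgebra ℚ M ⊗[ℚ] B →ₐ[ℚ] ExteriorAlgebra ℚ M ⊗[ℚ] B}

-- The `x_∅`-coefficient of `F (x_i ⊗ 1)` lies in `B` of the odd degree `d i`, which is zero.
theorem map_ι_tmul_one_mem_lengthFiltration (hgen : ∀ i, ExteriorAlgebra.ι ℚ (b i) ∈ 𝒜 (d i))
    (h1 : (1 : B) ∈ ℬ 0) (hF : ∀ m, ∀ z ∈ tensorGrading 𝒜 ℬ m, F z ∈ tensorGrading 𝒜 ℬ m)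
    (hd : ∀ i, Odd (d i)) (hBodd : ∀ m, Odd m → ℬ m = ⊥) (i : I) :
    F (ExteriorAlgebra.ι ℚ (b i) ⊗ₜ 1) ∈ lengthFiltration ℚ M B 1 := by
  refine mem_lengthFiltration_one_of_coeff_empty_eq_zero b ?_
  have hz : F (ExteriorAlgebra.ι ℚ (b i) ⊗ₜ 1) ∈
      tensorGrading 𝒜 ℬ ((∑ j ∈ (∅ : Finset I), d j) + d i) := by
    rw [Finset.sum_empty, zero_add, ← add_zero (d i)]
    exact hF _ _ (tmul_mem_tensorGrading (hgen i) h1)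
  have h := equivFinsuppOfBasisLeft_mem_of_mem_tensorGrading
    b.ExteriorAlgebra (basis_exteriorAlgebra_mem_graded b 𝒜 hgen) hz
  rwa [hBodd _ (hd i), Submodule.mem_bot] at h

theorem equivFinsuppOfBasisLeft_map_basis_tmul_self
    (hgen : ∀ i, ExteriorAlgebra.ι ℚ (b i) ∈ 𝒜 (d i)) (hB0 : ℬ 0 = 1)
    (hF : ∀ m, ∀ z ∈ tensorGrading 𝒜 ℬ m, F z ∈ tensorGrading 𝒜 ℬ m) (hd : ∀ i, Odd (d i))
    (hBodd : ∀ m, Odd m → ℬ m = ⊥) {εB : B →ₗ[ℚ] ℚ} (hεB1 : εB 1 = 1) (S : Finset I) (y : B) :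
    equivFinsuppOfBasisLeft b.ExteriorAlgebra (F (b.ExteriorAlgebra S ⊗ₜ y)) S =
      b.ExteriorAlgebra.repr (projLeft εB (F (b.ExteriorAlgebra S ⊗ₜ 1))) S •
        equivFinsuppOfBasisLeft b.ExteriorAlgebra (F (1 ⊗ₜ y)) ∅ := by
  have h1 : (1 : B) ∈ ℬ 0 := hB0 ▸ Submodule.one_le.mp le_rfl
  have hsplit : b.ExteriorAlgebra S ⊗ₜ[ℚ] y = (b.ExteriorAlgebra S ⊗ₜ[ℚ] (1 : B)) * (1 ⊗ₜ y) := by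
    rw [Algebra.TensorProduct.tmul_mul_tmul, mul_one, one_mul]
  have hdeg0 : equivFinsuppOfBasisLeft b.ExteriorAlgebra (F (b.ExteriorAlgebra S ⊗ₜ 1)) S ∈ ℬ 0 :=
    equivFinsuppOfBasisLeft_mem_of_mem_tensorGrading _ (basis_exteriorAlgebra_mem_graded b 𝒜 hgen)
      (hF _ _ (tmul_mem_tensorGrading (basis_exteriorAlgebra_mem_graded b 𝒜 hgen S) h1))
  rw [hB0] at hdeg0
  have hlen := map_basis_tmul_one_mem_lengthFiltration b
    (map_ι_tmul_one_mem_lengthFiltration b hgen h1 hF hd hBodd) S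
  rw [hsplit, map_mul, equivFinsuppOfBasisLeft_mul_of_mem_lengthFiltration b hlen, repr_projLeft]
  conv_lhs => rw [eq_smul_one_of_mem_one hεB1 hdeg0]
  rw [smul_mul_assoc, one_mul]

end GradedEndomorphism

end Paper

open scoped TensorProduct

theorem trace_eq_trace_mul_trace_of_graded_tensor_general
    (n : ℕ)
    (d : Fin n → ℕ) (hd : ∀ i, Odd (d i))
    (𝒜 : ℕ → Submodule ℚ (ExteriorAlgebra ℚ (Fin n → ℚ))) [GradedAlgebra 𝒜]
    (hgen : ∀ i, ExteriorAlgebra.ι ℚ (Pi.single i 1) ∈ 𝒜 (d i))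
    {B : Type*} [Ring B] [Algebra ℚ B] [Module.Finite ℚ B]
    (ℬ : ℕ → Submodule ℚ B)
    (hB0 : ℬ 0 = (1 : Submodule ℚ B))
    (hBodd : ∀ m, Odd m → ℬ m = ⊥)
    (F : (ExteriorAlgebra ℚ (Fin n → ℚ)) ⊗[ℚ] B →ₐ[ℚ] (ExteriorAlgebra ℚ (Fin n → ℚ)) ⊗[ℚ] B)
    (hF : ∀ m, ∀ z ∈ Paper.tensorGrading 𝒜 ℬ m, F z ∈ Paper.tensorGrading 𝒜 ℬ m)
    (εA : ExteriorAlgebra ℚ (Fin n → ℚ) →ₗ[ℚ] ℚ) (hεA1 : εA 1 = 1)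
    (hεA0 : ∀ m, m ≠ 0 → ∀ a ∈ 𝒜 m, εA a = 0)
    (εB : B →ₗ[ℚ] ℚ) (hεB1 : εB 1 = 1) :
    LinearMap.trace ℚ _ F.toLinearMap
      = LinearMap.trace ℚ _ (Paper.projLeft εB ∘ₗ F.toLinearMap ∘ₗ Paper.inclLeft)
        * LinearMap.trace ℚ _ (Paper.projRight εA ∘ₗ F.toLinearMap ∘ₗ Paper.inclRight) := by
  classical
  let b := Pi.basisFun ℚ (Fin n)
  let bB := Module.Free.chooseBasis ℚ B
  have hgen' : ∀ i, ExteriorAlgebra.ι ℚ (b i) ∈ 𝒜 (d i) := by simpa [b] using hgen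
  have hεA : εA = b.ExteriorAlgebra.coord ∅ :=
    Paper.augmentation_eq_coord 𝒜 b.ExteriorAlgebra
      (Paper.basis_exteriorAlgebra_mem_graded b 𝒜 hgen') (Paper.basis_exteriorAlgebra_empty b)
      (fun S hS => (Finset.sum_pos (fun i _ => (hd i).pos)
        (Finset.nonempty_iff_ne_empty.mpr hS)).ne')
      hεA1 hεA0
  have : Module.Finite ℚ (ExteriorAlgebra ℚ (Fin n → ℚ)) :=
    Module.Finite.of_basis b.ExteriorAlgebra
  rw [← LinearMap.trace_tensorProduct']
  refine Paper.trace_eq_of_repr_apply_self_eq (b.ExteriorAlgebra.tensorProduct bB)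
    fun ⟨S, k⟩ => ?_
  rw [Module.Basis.tensorProduct_apply, Paper.tensorProduct_repr_apply, AlgHom.toLinearMap_apply,
    Paper.equivFinsuppOfBasisLeft_map_basis_tmul_self b hgen' hB0 hF hd hBodd hεB1,
    TensorProduct.map_tmul, Module.Basis.tensorProduct_repr_tmul_apply, hεA]
  simp [Paper.inclLeft, Paper.inclRight, Paper.projRight_coord, mul_comm]

/-- Lemma 3.1 of the paper. Let `A = Λ_ℚ(x_1,…,x_n)` be a rational exterior
algebra on generators of odd degrees, `B` a finite-dimensional nonnegatively graded ℚ-algebra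
with `B^0 = ℚ·1` and no odd part, and `F` a graded ring endomorphism of `A ⊗ B` (w.r.t. the
tensor-product grading).  With `ε_A, ε_B` the degree-zero projections (characterized by
`ε 1 = 1` and vanishing in positive degrees), `ι_A, ι_B` the canonical inclusions and
`π_A, π_B` the maps `a ⊗ b ↦ ε_B(b)·a`, `a ⊗ b ↦ ε_A(a)·b`, we have
`tr F = tr (π_A ∘ F ∘ ι_A) · tr (π_B ∘ F ∘ ι_B)`. -/
theorem trace_eq_trace_mul_trace_of_graded_tensor
    (n : ℕ) [Module.Finite ℚ (ExteriorAlgebra ℚ (Fin n → ℚ))]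
    (d : Fin n → ℕ) (hd : ∀ i, Odd (d i))
    (𝒜 : ℕ → Submodule ℚ (ExteriorAlgebra ℚ (Fin n → ℚ))) [GradedAlgebra 𝒜]
    (hgen : ∀ i, ExteriorAlgebra.ι ℚ (Pi.single i 1) ∈ 𝒜 (d i))
    {B : Type*} [Ring B] [Algebra ℚ B] [Module.Finite ℚ B]
    (ℬ : ℕ → Submodule ℚ B) [GradedAlgebra ℬ]
    (hB0 : ℬ 0 = (1 : Submodule ℚ B))
    (hBodd : ∀ m, Odd m → ℬ m = ⊥)
    (F : (ExteriorAlgebra ℚ (Fin n → ℚ)) ⊗[ℚ] B →ₐ[ℚ] (ExteriorAlgebra ℚ (Fin n → ℚ)) ⊗[ℚ] B)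
    (hF : ∀ m, ∀ z ∈ Paper.tensorGrading 𝒜 ℬ m, F z ∈ Paper.tensorGrading 𝒜 ℬ m)
    (εA : ExteriorAlgebra ℚ (Fin n → ℚ) →ₗ[ℚ] ℚ) (hεA1 : εA 1 = 1)
    (hεA0 : ∀ m, m ≠ 0 → ∀ a ∈ 𝒜 m, εA a = 0)
    (εB : B →ₗ[ℚ] ℚ) (hεB1 : εB 1 = 1)
    (hεB0 : ∀ m, m ≠ 0 → ∀ b ∈ ℬ m, εB b = 0) :
    LinearMap.trace ℚ _ F.toLinearMap
      = LinearMap.trace ℚ _ (Paper.projLeft εB ∘ₗ F.toLinearMap ∘ₗ Paper.inclLeft)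
        * LinearMap.trace ℚ _ (Paper.projRight εA ∘ₗ F.toLinearMap ∘ₗ Paper.inclRight) :=
  trace_eq_trace_mul_trace_of_graded_tensor_general n d hd 𝒜 hgen ℬ hB0 hBodd F hF εA hεA1 hεA0 εB
    hεB1
end
end
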